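/- (Fejér monotonicity of the W-iterates.) Under the algorithm setup with Assumption 1, for every W ∈ ⋂_{n≥m₀} Fix(S_n) and every n ≥ m₀: ‖W_{n+1} − W‖_F² ≤ ‖W_n − W‖_F² − β_n(1 − β_n)‖W_n − S_n(W_n)‖_F²; in particular ‖W_{n+1} − W‖_F ≤ ‖W_n − W‖_F. -/

import Mathlib

open Matrix Filter

/-- Frobenius norm of a real matrix. -/
noncomputable def frob {m n : Type*} [Fintype m] [Fintype n] (X : Matrix m n ℝ) : ℝ :=
  Real.sqrt (∑ i, ∑ j, (X i j) ^ 2)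

/-- Frobenius inner product of two real matrices. -/
noncomputable def fip {m n : Type*} [Fintype m] [Fintype n] (X Y : Matrix m n ℝ) : ℝ :=
  ∑ i, ∑ j, X i j * Y i j

/-- Entrywise projection onto the nonnegative orthant. -/
def pplus {m n : Type*} (X : Matrix m n ℝ) : Matrix m n ℝ :=
  Matrix.of fun i j => max (X i j) 0

/-- Entrywise nonnegativity of a matrix. -/
def matNonneg {m n : Type*} (X : Matrix m n ℝ) : Prop := ∀ i j, 0 ≤ X i j

/-!
Each `S_n` is a projected gradient step for `W ↦ ½‖W H_{n+1} − V‖_F²` on the nonnegative orthant.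
The gradient step `D ↦ D − λ D H Hᵀ` on differences is nonexpansive because `λ‖HᵀH‖_F ≤ 2`, and
`P₊` is nonexpansive, so `S_n` is nonexpansive; hence it does not increase the distance to any of
its fixed points. The relaxed step `βx + (1 − β)S x` then satisfies the Fejér inequality by the
identity `‖βa + (1 − β)b‖² = β‖a‖² + (1 − β)‖b‖² − β(1 − β)‖a − b‖²`.
-/

open scoped Matrix.Norms.Frobenius

section Frobenius

variable {l m n : Type*} [Fintype l] [Fintype m] [Fintype n]

lemma frob_eq_norm (X : Matrix m n ℝ) : frob X = ‖X‖ := by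
  rw [frobenius_norm_def, frob, Real.sqrt_eq_rpow]
  simp

lemma frob_nonneg (X : Matrix m n ℝ) : 0 ≤ frob X := Real.sqrt_nonneg _

lemma frob_sq (X : Matrix m n ℝ) : frob X ^ 2 = ∑ i, ∑ j, X i j ^ 2 :=
  Real.sq_sqrt (by positivity)

lemma frob_sq_eq_fip (X : Matrix m n ℝ) : frob X ^ 2 = fip X X := by
  rw [frob_sq, fip]; simp only [sq]

lemma frob_mul_le (X : Matrix l m ℝ) (Y : Matrix m n ℝ) : frob (X * Y) ≤ frob X * frob Y := by
  simpa only [frob_eq_norm] using frobenius_norm_mul X Y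

lemma frob_le_frob_of_sq_le {X Y : Matrix m n ℝ} (h : ∀ i j, X i j ^ 2 ≤ Y i j ^ 2) :
    frob X ≤ frob Y :=
  Real.sqrt_le_sqrt (Finset.sum_le_sum fun i _ => Finset.sum_le_sum fun j _ => h i j)

lemma fip_le_frob_mul_frob (X Y : Matrix m n ℝ) : fip X Y ≤ frob X * frob Y := by
  simpa only [fip, frob, Fintype.sum_prod_type] using Real.sum_mul_le_sqrt_mul_sqrt
    (Finset.univ : Finset (m × n)) (fun p => X p.1 p.2) (fun p => Y p.1 p.2)

lemma fip_mul_transpose (X : Matrix l m ℝ) (Y : Matrix l n ℝ) (Z : Matrix m n ℝ) :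
    fip X (Y * Zᵀ) = fip (X * Z) Y := by
  simp only [fip, Matrix.mul_apply, Matrix.transpose_apply, Finset.mul_sum, Finset.sum_mul]
  rw [Finset.sum_congr rfl fun i _ => Finset.sum_comm]
  exact Finset.sum_congr rfl fun i _ => Finset.sum_congr rfl fun j _ =>
    Finset.sum_congr rfl fun k _ => by ring

lemma frob_sub_smul_sq (D G : Matrix m n ℝ) (t : ℝ) :
    frob (D - t • G) ^ 2 = frob D ^ 2 - 2 * t * fip D G + t ^ 2 * fip G G := by
  simp only [frob_sq, fip, Matrix.sub_apply, Matrix.smul_apply, smul_eq_mul,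
    Finset.mul_sum, ← Finset.sum_sub_distrib, ← Finset.sum_add_distrib]
  exact Finset.sum_congr rfl fun i _ => Finset.sum_congr rfl fun j _ => by ring

lemma frob_convexComb_sub_sq (x s p : Matrix m n ℝ) (b : ℝ) :
    frob (b • x + (1 - b) • s - p) ^ 2 =
      b * frob (x - p) ^ 2 + (1 - b) * frob (s - p) ^ 2 - b * (1 - b) * frob (x - s) ^ 2 := by
  simp only [frob_sq, Matrix.sub_apply, Matrix.add_apply, Matrix.smul_apply, smul_eq_mul,
    Finset.mul_sum, ← Finset.sum_sub_distrib, ← Finset.sum_add_distrib]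
  exact Finset.sum_congr rfl fun i _ => Finset.sum_congr rfl fun j _ => by ring

lemma frob_convexComb_sub_sq_le {x s p : Matrix m n ℝ} {b : ℝ} (hb : b ≤ 1)
    (hs : frob (s - p) ≤ frob (x - p)) :
    frob (b • x + (1 - b) • s - p) ^ 2 ≤
      frob (x - p) ^ 2 - b * (1 - b) * frob (x - s) ^ 2 := by
  have hsq : frob (s - p) ^ 2 ≤ frob (x - p) ^ 2 := pow_le_pow_left₀ (frob_nonneg _) hs 2
  rw [frob_convexComb_sub_sq]
  nlinarith [mul_le_mul_of_nonneg_left hsq (sub_nonneg.mpr hb)]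

end Frobenius

section ProjectedGradient

variable {k m n : Type*} [Fintype k] [Fintype m] [Fintype n]

lemma frob_pplus_sub_pplus_le (X Y : Matrix m n ℝ) : frob (pplus X - pplus Y) ≤ frob (X - Y) :=
  frob_le_frob_of_sq_le fun i j => by
    simpa only [sq_abs, pplus, Matrix.sub_apply, Matrix.of_apply] using
      pow_le_pow_left₀ (abs_nonneg _) (abs_max_sub_max_le_abs (X i j) (Y i j) 0) 2

lemma frob_sub_smul_mul_mul_transpose_le (D : Matrix m k ℝ) (Hm : Matrix k n ℝ) {t : ℝ}
    (ht : 0 < t) (ht2 : t ≤ 2 / frob (Hmᵀ * Hm)) :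
    frob (D - t • (D * Hm * Hmᵀ)) ≤ frob D := by
  set c := frob (Hmᵀ * Hm) with hc_def
  have hc : 0 < c := (frob_nonneg _).lt_of_ne fun h => by
    rw [hc_def, ← h, div_zero] at ht2; linarith
  have htc : t * c ≤ 2 := (le_div_iff₀ hc).mp ht2
  set E := D * Hm
  have hcross : fip D (E * Hmᵀ) = frob E ^ 2 := by
    rw [fip_mul_transpose, frob_sq_eq_fip]
  have hquad : fip (E * Hmᵀ) (E * Hmᵀ) ≤ c * frob E ^ 2 :=
    calc fip (E * Hmᵀ) (E * Hmᵀ) = fip (E * (Hmᵀ * Hm)) E := by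
          rw [fip_mul_transpose, Matrix.mul_assoc]
      _ ≤ frob (E * (Hmᵀ * Hm)) * frob E := fip_le_frob_mul_frob _ _
      _ ≤ frob E * c * frob E := by gcongr; exacts [frob_nonneg _, frob_mul_le _ _]
      _ = c * frob E ^ 2 := by ring
  have hsq : frob (D - t • (E * Hmᵀ)) ^ 2 ≤ frob D ^ 2 := by
    rw [frob_sub_smul_sq, hcross]
    nlinarith [mul_le_mul_of_nonneg_left hquad (sq_nonneg t),
      mul_le_mul_of_nonneg_right htc (mul_nonneg ht.le (sq_nonneg (frob E)))]
  exact le_of_pow_le_pow_left₀ two_ne_zero (frob_nonneg D) hsq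

def projGradStep (t : ℝ) (Hm : Matrix k n ℝ) (V : Matrix m n ℝ) (X : Matrix m k ℝ) :
    Matrix m k ℝ :=
  pplus (X - t • ((X * Hm - V) * Hmᵀ))

lemma frob_projGradStep_sub_le (V : Matrix m n ℝ) (Hm : Matrix k n ℝ) {t : ℝ} (ht : 0 < t)
    (ht2 : t ≤ 2 / frob (Hmᵀ * Hm)) (X Y : Matrix m k ℝ) :
    frob (projGradStep t Hm V X - projGradStep t Hm V Y) ≤ frob (X - Y) :=
  calc frob (projGradStep t Hm V X - projGradStep t Hm V Y)
      ≤ frob ((X - t • ((X * Hm - V) * Hmᵀ)) - (Y - t • ((Y * Hm - V) * Hmᵀ))) :=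
        frob_pplus_sub_pplus_le _ _
    _ = frob ((X - Y) - t • ((X - Y) * Hm * Hmᵀ)) := by
        congr 1; simp only [Matrix.sub_mul]; module
    _ ≤ frob (X - Y) := frob_sub_smul_mul_mul_transpose_le _ _ ht ht2

end ProjectedGradient

theorem stmt_11_general
    (M N R : ℕ)
    (V : Matrix (Fin M) (Fin N) ℝ)
    (W : ℕ → Matrix (Fin M) (Fin R) ℝ) (H : ℕ → Matrix (Fin R) (Fin N) ℝ)
    (β lam : ℕ → ℝ)
    (S : ℕ → Matrix (Fin M) (Fin R) ℝ → Matrix (Fin M) (Fin R) ℝ)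
    (hβ : ∀ n, β n ∈ Set.Icc (0:ℝ) 1)
    (hlam : ∀ n, H (n + 1) ≠ 0 → 0 < lam n ∧ lam n ≤ 2 / frob ((H (n + 1))ᵀ * H (n + 1)))
    (hS : ∀ n, H (n + 1) ≠ 0 → ∀ X, S n X = pplus (X - lam n • ((X * H (n + 1) - V) * (H (n + 1))ᵀ)))
    (hS0 : ∀ n, H (n + 1) = 0 → ∀ X, S n X = X)
    (hWrec : ∀ n, W (n + 1) = β n • W n + (1 - β n) • S n (W n))
    (m₀ : ℕ)
    :
    ∀ Wf : Matrix (Fin M) (Fin R) ℝ, (∀ n ≥ m₀, S n Wf = Wf) →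
      ∀ n ≥ m₀,
        frob (W (n + 1) - Wf) ^ 2 ≤
          frob (W n - Wf) ^ 2 - β n * (1 - β n) * frob (W n - S n (W n)) ^ 2 ∧
        frob (W (n + 1) - Wf) ≤ frob (W n - Wf) := by
  intro Wf hWf n hn
  obtain ⟨hβ0, hβ1⟩ := hβ n
  have hquasi : frob (S n (W n) - Wf) ≤ frob (W n - Wf) := by
    by_cases hH : H (n + 1) = 0
    · rw [hS0 n hH]
    · have hSn : S n = projGradStep (lam n) (H (n + 1)) V := funext (hS n hH)
      calc frob (S n (W n) - Wf) = frob (S n (W n) - S n Wf) := by rw [hWf n hn]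
        _ ≤ frob (W n - Wf) := by
          rw [hSn]; exact frob_projGradStep_sub_le V _ (hlam n hH).1 (hlam n hH).2 _ _
  have hfejer := frob_convexComb_sub_sq_le hβ1 hquasi
  rw [← hWrec n] at hfejer
  refine ⟨hfejer, le_of_pow_le_pow_left₀ two_ne_zero (frob_nonneg _) (hfejer.trans ?_)⟩
  have : 0 ≤ 1 - β n := sub_nonneg.mpr hβ1
  exact sub_le_self _ (by positivity)

theorem stmt_11
    (M N R : ℕ) (hM : 0 < M) (hN : 0 < N) (hR : 0 < R)
    (V : Matrix (Fin M) (Fin N) ℝ)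
    (W : ℕ → Matrix (Fin M) (Fin R) ℝ) (H : ℕ → Matrix (Fin R) (Fin N) ℝ)
    (α β μ lam : ℕ → ℝ)
    (T : ℕ → Matrix (Fin R) (Fin N) ℝ → Matrix (Fin R) (Fin N) ℝ)
    (S : ℕ → Matrix (Fin M) (Fin R) ℝ → Matrix (Fin M) (Fin R) ℝ)
    (hW0 : matNonneg (W 0)) (hH0 : matNonneg (H 0))
    (hα : ∀ n, α n ∈ Set.Icc (0:ℝ) 1) (hβ : ∀ n, β n ∈ Set.Icc (0:ℝ) 1)
    (hμ : ∀ n, W n ≠ 0 → 0 < μ n ∧ μ n ≤ 2 / frob ((W n)ᵀ * W n))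
    (hT : ∀ n, W n ≠ 0 → ∀ X, T n X = pplus (X - μ n • ((W n)ᵀ * (W n * X - V))))
    (hT0 : ∀ n, W n = 0 → ∀ X, T n X = X)
    (hHrec : ∀ n, H (n + 1) = α n • H n + (1 - α n) • T n (H n))
    (hlam : ∀ n, H (n + 1) ≠ 0 → 0 < lam n ∧ lam n ≤ 2 / frob ((H (n + 1))ᵀ * H (n + 1)))
    (hS : ∀ n, H (n + 1) ≠ 0 → ∀ X, S n X = pplus (X - lam n • ((X * H (n + 1) - V) * (H (n + 1))ᵀ)))
    (hS0 : ∀ n, H (n + 1) = 0 → ∀ X, S n X = X)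
    (hWrec : ∀ n, W (n + 1) = β n • W n + (1 - β n) • S n (W n))
    (m₀ : ℕ)
    (hFixS : ∃ Wf : Matrix (Fin M) (Fin R) ℝ, ∀ n ≥ m₀, S n Wf = Wf)
    (hFixT : ∃ Hf : Matrix (Fin R) (Fin N) ℝ, ∀ n ≥ m₀, T n Hf = Hf)
    :
    ∀ Wf : Matrix (Fin M) (Fin R) ℝ, (∀ n ≥ m₀, S n Wf = Wf) →
      ∀ n ≥ m₀,
        frob (W (n + 1) - Wf) ^ 2 ≤
          frob (W n - Wf) ^ 2 - β n * (1 - β n) * frob (W n - S n (W n)) ^ 2 ∧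
        frob (W (n + 1) - Wf) ≤ frob (W n - Wf) :=
  stmt_11_general M N R V W H β lam S hβ hlam hS hS0 hWrec m₀
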